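/- arXiv:math/0503350 — 3 statements merged into one kernel-verified Lean document; each statement's English description precedes it below -/
import Mathlib

section
/- Let X and Y be standard Borel spaces and f : X → Y a Borel map with countable fibers (i.e., f⁻¹({y}) is countable for every y ∈ Y). Then f(X) is a Borel subset of Y. -/
/-!
After refining the topologies, `f` is a continuous map between Polish spaces, so `range f` is
analytic and, by Suslin's theorem, it suffices to show that its complement is analytic.

Each fibre of `f` is countable and closed, so by Baire's theorem it has an isolated point. Hence
`y ∈ range f` iff, for some basic open set `U`, the fibre of `y` meets `U` in exactly one point.
Lusin's second separation theorem gives coanalytic sets `D U i j ⊇ f(Bᵢ ∩ U) \ f(Bⱼ ∩ U)`, for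
balls `Bᵢ` of a countable basis, such that `D U i j` and `D U j i` are disjoint. Then `y ∈ range f`
iff for some `U` and every scale there is a small ball `Bᵢ` such that `y ∈ closure f(Bᵢ ∩ U)` and
`y ∈ D U i j` for every `Bⱼ` disjoint from `Bᵢ`. The chosen balls then meet pairwise, so they
converge to a preimage of `y`. This condition is coanalytic.

The second separation theorem for `range g` and `range h`, with `g h` continuous on Baire space,
compares the trees `{l | y ∈ closure g(Nₗ)}` (`Nₗ` the cylinder of `l`). Such a tree has an infinite
branch iff `y ∈ range g`, and of two well-founded trees, one maps into the other by a map that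
preserves extensions, by comparing ranks. The existence of such a map is an analytic condition on
`y`.
-/

open Set Filter Topology MeasureTheory PiNat

theorem MeasureTheory.AnalyticSet.union {α : Type*} [TopologicalSpace α] {s t : Set α}
    (hs : AnalyticSet s) (ht : AnalyticSet t) : AnalyticSet (s ∪ t) := by
  rw [union_eq_iUnion]
  exact AnalyticSet.iUnion (Bool.forall_bool.2 ⟨ht, hs⟩)

namespace LusinNovikov

section Trees

/-- Finite sequences are stored newest entry first, as in `PiNat.res`, so trees are closed under
`List.tail`. -/
def IsTree (T : Set (List ℕ)) : Prop := ∀ ⦃n : ℕ⦄ ⦃l : List ℕ⦄, n :: l ∈ T → l ∈ T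

def HasBranch (T : Set (List ℕ)) : Prop := ∃ z : ℕ → ℕ, ∀ n, res z n ∈ T

def IsTreeHom (φ : List ℕ → List ℕ) (T S : Set (List ℕ)) : Prop :=
  φ [] = [] ∧ MapsTo φ T S ∧ ∀ ⦃n : ℕ⦄ ⦃l : List ℕ⦄, n :: l ∈ T → ∃ m, φ (n :: l) = m :: φ l

def TreeLE (T S : Set (List ℕ)) : Prop := ∃ φ, IsTreeHom φ T S

def Child (T : Set (List ℕ)) (a b : List ℕ) : Prop := a ∈ T ∧ ∃ n, a = n :: b

variable {T S : Set (List ℕ)}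

theorem IsTree.nil_mem (hT : IsTree T) : ∀ {l : List ℕ}, l ∈ T → [] ∈ T
  | [], h => h
  | _ :: _, h => hT.nil_mem (hT h)

theorem HasBranch.treeLE (h : HasBranch S) : TreeLE T S :=
  let ⟨z, hz⟩ := h
  ⟨fun l => res z l.length, rfl, fun _ _ => hz _, fun _ l _ => ⟨z l.length, rfl⟩⟩

theorem TreeLE.hasBranch (h : TreeLE T S) (hb : HasBranch T) : HasBranch S := by
  obtain ⟨φ, hφ_nil, hφ_mapsTo, hφ_cons⟩ := h
  obtain ⟨z, hz⟩ := hb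
  choose m hm using fun n => hφ_cons (hz (n + 1))
  have hφz : ∀ n, φ (res z n) = res m n := by
    intro n
    induction n with
    | zero => exact hφ_nil
    | succ n ih => rw [res_succ, hm n, ih, res_succ]
  exact ⟨m, fun n => hφz n ▸ hφ_mapsTo (hz n)⟩

theorem wellFounded_child (hT : IsTree T) (hb : ¬HasBranch T) : WellFounded (Child T) := by
  have hnil : Acc (Child T) [] := by
    by_contra hnil
    obtain ⟨c, hc₀, hc⟩ := not_acc_iff_exists_descending_chain.1 hnil
    choose m hm using fun n => (hc n).2
    have hcm : ∀ n, c n = res m n := by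
      intro n
      induction n with
      | zero => exact hc₀
      | succ n ih => rw [hm n, ih, res_succ]
    exact hb ⟨m, fun n => hT (hcm (n + 1) ▸ (hc n).1)⟩
  refine ⟨fun l => ?_⟩
  induction l with
  | nil => exact hnil
  | cons n l ih =>
    refine ⟨_, fun b hb => ?_⟩
    obtain ⟨hbT, k, rfl⟩ := hb
    exact (ih.inv ⟨hT hbT, n, rfl⟩).inv ⟨hbT, k, rfl⟩

section RankMap

variable (wfT : WellFounded (Child T)) (wfS : WellFounded (Child S))

/-- Sends `n :: l` to a child of `rankMap l` in `S` whose rank is at least the rank of `n :: l`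
in `T`, if there is one. -/
noncomputable def rankMap : List ℕ → List ℕ
  | [] => []
  | n :: l => Classical.epsilon (fun m => m :: rankMap l ∈ S ∧
      (wfT.apply (n :: l)).rank ≤ (wfS.apply (m :: rankMap l)).rank) :: rankMap l

theorem rankMap_mem_and_rank_le (hT : IsTree T) (hnil : [] ∈ S)
    (hroot : (wfT.apply []).rank ≤ (wfS.apply []).rank) :
    ∀ l ∈ T, rankMap wfT wfS l ∈ S ∧ (wfT.apply l).rank ≤ (wfS.apply (rankMap wfT wfS l)).rank
  | [], _ => ⟨hnil, hroot⟩
  | n :: l, hl => by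
    obtain ⟨-, hle⟩ := rankMap_mem_and_rank_le hT hnil hroot l (hT hl)
    have hlt := ((wfT.apply l).rank_lt_of_rel (⟨hl, n, rfl⟩ : Child T (n :: l) l)).trans_le hle
    rw [(wfS.apply _).rank_eq, Ordinal.lt_iSup_iff] at hlt
    obtain ⟨⟨_, hmS, m, rfl⟩, hm⟩ : ∃ b : {b // b ∈ S ∧ ∃ m, b = m :: rankMap wfT wfS l}, _ := hlt
    exact Classical.epsilon_spec (p := fun m => m :: rankMap wfT wfS l ∈ S ∧
      (wfT.apply (n :: l)).rank ≤ (wfS.apply (m :: rankMap wfT wfS l)).rank)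
      ⟨m, hmS, Order.lt_succ_iff.1 hm⟩

theorem isTreeHom_rankMap (hT : IsTree T) (hnil : [] ∈ S)
    (hroot : (wfT.apply []).rank ≤ (wfS.apply []).rank) : IsTreeHom (rankMap wfT wfS) T S :=
  ⟨rfl, fun l hl => (rankMap_mem_and_rank_le wfT wfS hT hnil hroot l hl).1, fun _ _ _ => ⟨_, rfl⟩⟩

end RankMap

theorem treeLE_of_nil_notMem (hT : IsTree T) (hnil : [] ∉ T) : TreeLE T S :=
  ⟨id, rfl, fun _ hl => absurd (hT.nil_mem hl) hnil, fun n _ _ => ⟨n, rfl⟩⟩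

theorem treeLE_total (hT : IsTree T) (hS : IsTree S) (hTb : ¬HasBranch T)
    (hSb : ¬HasBranch S) : TreeLE T S ∨ TreeLE S T := by
  by_cases hT_nil : [] ∈ T
  swap; · exact .inl (treeLE_of_nil_notMem hT hT_nil)
  by_cases hS_nil : [] ∈ S
  swap; · exact .inr (treeLE_of_nil_notMem hS hS_nil)
  have hTwf := wellFounded_child hT hTb
  have hSwf := wellFounded_child hS hSb
  rcases le_total (hTwf.apply []).rank (hSwf.apply []).rank with h | h
  · exact .inl ⟨_, isTreeHom_rankMap hTwf hSwf hT hS_nil h⟩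
  · exact .inr ⟨_, isTreeHom_rankMap hSwf hTwf hS hT_nil h⟩

end Trees

section ImageTree

variable {X Y : Type*} [TopologicalSpace X] [TopologicalSpace Y]

theorem eq_of_forall_mem_closure_image [T2Space Y] {f : X → Y} {z : X} (hf : ContinuousAt f z)
    {ι : Type*} {s : ι → Set X} (hs : ∀ V ∈ 𝓝 z, ∃ i, s i ⊆ V) {y : Y}
    (hy : ∀ i, y ∈ closure (f '' s i)) : f z = y := by
  by_contra hne
  obtain ⟨v, w, hv, hw, hzv, hyw, hvw⟩ := t2_separation hne
  obtain ⟨i, hi⟩ := hs _ (hf.preimage_mem_nhds (hv.mem_nhds hzv))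
  exact disjoint_left.1 (hvw.closure_left hw) (closure_mono (image_subset_iff.2 hi) (hy i)) hyw

def imageTree (g : (ℕ → ℕ) → Y) (y : Y) : Set (List ℕ) :=
  {l | y ∈ closure (g '' {x | res x l.length = l})}

theorem isTree_imageTree (g : (ℕ → ℕ) → Y) (y : Y) : IsTree (imageTree g y) :=
  fun _ _ h => closure_mono (image_mono fun _ hx => (List.cons_eq_cons.1 hx).2) h

theorem hasBranch_imageTree_iff [T2Space Y] {g : (ℕ → ℕ) → Y} (hg : Continuous g) {y : Y} :
    HasBranch (imageTree g y) ↔ y ∈ range g := by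
  refine ⟨fun ⟨z, hz⟩ => ⟨z, eq_of_forall_mem_closure_image hg.continuousAt (fun V hV => ?_)
    fun n => by simpa [imageTree, ← cylinder_eq_res] using hz n⟩, ?_⟩
  · obtain ⟨_, ⟨x, n, rfl⟩, hzx, hxV⟩ := (isTopologicalBasis_cylinders _).mem_nhds_iff.1 hV
    exact ⟨n, mem_cylinder_iff_eq.1 hzx ▸ hxV⟩
  · rintro ⟨x, rfl⟩
    exact ⟨x, fun n => subset_closure (mem_image_of_mem g (by simp))⟩

end ImageTree

section Separation

variable {Y : Type*} [TopologicalSpace Y] [MeasurableSpace Y]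

/-- Maps `List ℕ → List ℕ` coded by points of Baire space, so that an existential quantifier over
such maps becomes a projection. -/
noncomputable def decodeMap (F : ℕ → ℕ) (l : List ℕ) : List ℕ :=
  Denumerable.ofNat (List ℕ) (F (Encodable.encode l))

theorem decodeMap_surjective : Function.Surjective decodeMap := fun φ =>
  ⟨fun k => Encodable.encode (φ (Denumerable.ofNat (List ℕ) k)),
    funext fun _ => by simp [decodeMap]⟩

theorem measurable_decodeMap_pair (P : List ℕ → List ℕ → Prop) (l l' : List ℕ) :
    Measurable fun F : ℕ → ℕ => P (decodeMap F l) (decodeMap F l') := by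
  have hcoord : Measurable fun F : ℕ → ℕ => (F (Encodable.encode l), F (Encodable.encode l')) := by
    fun_prop
  unfold decodeMap
  exact (measurable_of_countable fun k : ℕ × ℕ =>
    P (Denumerable.ofNat (List ℕ) k.1) (Denumerable.ofNat (List ℕ) k.2)).comp hcoord

variable [OpensMeasurableSpace Y]

theorem measurable_mem_imageTree (g : (ℕ → ℕ) → Y) (l : List ℕ) :
    Measurable fun y => l ∈ imageTree g y :=
  isClosed_closure.measurableSet.mem

theorem measurable_mem_imageTree_decodeMap (g : (ℕ → ℕ) → Y) (l : List ℕ) :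
    Measurable fun p : Y × (ℕ → ℕ) => decodeMap p.2 l ∈ imageTree g p.1 := by
  have hcoord : Measurable fun p : Y × (ℕ → ℕ) => (p.1, p.2 (Encodable.encode l)) := by fun_prop
  have := (measurable_from_prod_countable_left (f := fun q : Y × ℕ =>
    Denumerable.ofNat (List ℕ) q.2 ∈ imageTree g q.1)
    fun k => measurable_mem_imageTree g (Denumerable.ofNat (List ℕ) k)).comp hcoord
  unfold decodeMap
  exact this

variable [PolishSpace Y] [BorelSpace Y]

theorem analyticSet_setOf_treeLE (g h : (ℕ → ℕ) → Y) :
    AnalyticSet {y | TreeLE (imageTree g y) (imageTree h y)} := by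
  have hmeas : MeasurableSet
      {p : Y × (ℕ → ℕ) | IsTreeHom (decodeMap p.2) (imageTree g p.1) (imageTree h p.1)} := by
    have h_nil : Measurable fun p : Y × (ℕ → ℕ) => decodeMap p.2 [] = [] :=
      (measurable_decodeMap_pair (fun a _ => a = []) [] []).comp measurable_snd
    have h_mapsTo : Measurable fun p : Y × (ℕ → ℕ) =>
        ∀ ⦃l⦄, l ∈ imageTree g p.1 → decodeMap p.2 l ∈ imageTree h p.1 :=
      Measurable.forall fun l => ((measurable_mem_imageTree g l).comp measurable_fst).imp
        (measurable_mem_imageTree_decodeMap h l)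
    have h_cons : Measurable fun p : Y × (ℕ → ℕ) => ∀ ⦃n l⦄, n :: l ∈ imageTree g p.1 →
        ∃ m, decodeMap p.2 (n :: l) = m :: decodeMap p.2 l :=
      Measurable.forall fun n => Measurable.forall fun l =>
        ((measurable_mem_imageTree g _).comp measurable_fst).imp
          ((measurable_decodeMap_pair (fun a b => ∃ m, a = m :: b) (n :: l) l).comp measurable_snd)
    exact (h_nil.and (h_mapsTo.and h_cons)).setOf
  have himage : {y | TreeLE (imageTree g y) (imageTree h y)} = Prod.fst ''
      {p : Y × (ℕ → ℕ) | IsTreeHom (decodeMap p.2) (imageTree g p.1) (imageTree h p.1)} := by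
    ext y
    simp only [TreeLE, mem_ofPred_eq, mem_image, Prod.exists, exists_and_right, exists_eq_right]
    exact decodeMap_surjective.exists
  rw [himage]
  exact hmeas.analyticSet_image measurable_fst

theorem exists_coanalytic_separation_range {g h : (ℕ → ℕ) → Y} (hg : Continuous g)
    (hh : Continuous h) : ∃ C C' : Set Y, AnalyticSet Cᶜ ∧ AnalyticSet C'ᶜ ∧
      range g \ range h ⊆ C ∧ range h \ range g ⊆ C' ∧ Disjoint C C' := by
  have hsep : ∀ {g h : (ℕ → ℕ) → Y}, Continuous g → Continuous h →
      AnalyticSet ((range h)ᶜ ∩ {y | ¬TreeLE (imageTree g y) (imageTree h y)})ᶜ ∧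
      range g \ range h ⊆ (range h)ᶜ ∩ {y | ¬TreeLE (imageTree g y) (imageTree h y)} := by
    intro g h hg hh
    refine ⟨?_, fun y ⟨hyg, hyh⟩ => ⟨hyh, fun hle => hyh ?_⟩⟩
    · rw [compl_inter, compl_compl]
      exact (analyticSet_range_of_polishSpace hh).union (by
        simpa only [compl_ofPred, not_not] using analyticSet_setOf_treeLE g h)
    · exact (hasBranch_imageTree_iff hh).1
        (hle.hasBranch ((hasBranch_imageTree_iff hg).2 hyg))
  refine ⟨_, _, (hsep hg hh).1, (hsep hh hg).1, (hsep hg hh).2, (hsep hh hg).2, ?_⟩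
  refine disjoint_left.2 fun y ⟨hyh, hgh⟩ ⟨hyg, hhg⟩ => ?_
  exact (treeLE_total (isTree_imageTree g y) (isTree_imageTree h y)
    (mt (hasBranch_imageTree_iff hg).1 hyg) (mt (hasBranch_imageTree_iff hh).1 hyh)).elim hgh hhg

/-- **Lusin's second separation theorem**, with coanalytic separating sets. -/
theorem exists_coanalytic_separation {A B : Set Y} (hA : AnalyticSet A) (hB : AnalyticSet B) :
    ∃ C C' : Set Y, AnalyticSet Cᶜ ∧ AnalyticSet C'ᶜ ∧ A \ B ⊆ C ∧ B \ A ⊆ C' ∧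
      Disjoint C C' := by
  rw [AnalyticSet] at hA hB
  rcases hA with rfl | ⟨g, hg, rfl⟩
  · exact ⟨∅, univ, by simpa using isClosed_univ.analyticSet, by simpa using analyticSet_empty,
      by simp, by simp, disjoint_bot_left⟩
  rcases hB with rfl | ⟨h, hh, rfl⟩
  · exact ⟨univ, ∅, by simpa using analyticSet_empty, by simpa using isClosed_univ.analyticSet,
      by simp, by simp, disjoint_bot_right⟩
  exact exists_coanalytic_separation_range hg hh

theorem exists_coanalytic_separators {ι : Type*} {A : ι → Set Y} (hA : ∀ i, AnalyticSet (A i)) :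
    ∃ D : ι → ι → Set Y, (∀ i j, AnalyticSet (D i j)ᶜ) ∧ (∀ i j, A i \ A j ⊆ D i j) ∧
      ∀ i j, Disjoint (D i j) (D j i) := by
  choose C C' hC hC' hAC hAC' hCC' using fun i j => exists_coanalytic_separation (hA i) (hA j)
  refine ⟨fun i j => C i j ∩ C' j i, fun i j => ?_, fun i j => subset_inter (hAC i j) (hAC' j i),
    fun i j => ((hCC' i j).mono inter_subset_left inter_subset_right)⟩
  rw [compl_inter]
  exact (hC i j).union (hC' j i)

end Separation


theorem _root_.IsClosed.exists_nhdsWithin_eq_pure_of_countable {X : Type*} [TopologicalSpace X]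
    [PolishSpace X] {K : Set X} (hK : IsClosed K) (hKc : K.Countable) (hKne : K.Nonempty) :
    ∃ x ∈ K, 𝓝[K] x = pure x := by
  have : PolishSpace K := hK.polishSpace
  have : Countable K := hKc.to_subtype
  have : Nonempty K := hKne.to_subtype
  obtain ⟨x, hx⟩ := nonempty_interior_of_iUnion_of_closed (f := fun x : K => ({x} : Set K))
    (fun _ => isClosed_singleton) (iUnion_of_singleton K)
  have hx_open : IsOpen ({x} : Set K) :=
    interior_eq_iff_isOpen.1 (hx.subset_singleton_iff.1 interior_subset)
  refine ⟨x, x.2, ?_⟩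
  rw [← map_nhds_subtype_val, (isOpen_singleton_iff_nhds_eq_pure x).1 hx_open, map_pure]

section Localized

open Metric TopologicalSpace

section PseudoMetric

variable {X : Type*} [PseudoMetricSpace X]

theorem cauchySeq_of_forall_not_disjoint_ball {c : ℕ → X} {r : ℕ → ℝ}
    (hr : Tendsto r atTop (𝓝 0)) (h : ∀ m n, ¬Disjoint (ball (c m) (r m)) (ball (c n) (r n))) :
    CauchySeq c := by
  refine Metric.cauchySeq_iff'.2 fun ε hε => ?_
  obtain ⟨N, hN⟩ := eventually_atTop.1 ((tendsto_order.1 hr).2 _ (half_pos hε))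
  refine ⟨N, fun n hn => ?_⟩
  have := not_le.1 (mt ball_disjoint_ball (h n N))
  linarith [hN n hn, hN N le_rfl]

theorem forall_ball_subset_of_tendsto {c : ℕ → X} {r : ℕ → ℝ} {z : X}
    (hc : Tendsto c atTop (𝓝 z)) (hr : Tendsto r atTop (𝓝 0)) :
    ∀ V ∈ 𝓝 z, ∃ n, ball (c n) (r n) ⊆ V := by
  intro V hV
  obtain ⟨ε, hε, hεV⟩ := Metric.mem_nhds_iff.1 hV
  obtain ⟨n, hcn, hrn⟩ := ((tendsto_order.1 hr).2 _ (half_pos hε)).and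
    (Metric.tendsto_nhds.1 hc _ (half_pos hε)) |>.exists
  exact ⟨n, (ball_subset_ball' (by linarith)).trans hεV⟩

end PseudoMetric

variable {X Y : Type*} [MetricSpace X] [SeparableSpace X] [Nonempty X] [TopologicalSpace Y]

def denseBall (p : ℕ × ℕ) : Set X := ball (denseSeq X p.1) (1 / (p.2 + 1))

theorem exists_mem_denseBall (x : X) (n : ℕ) : ∃ k, x ∈ (denseBall (k, n) : Set X) :=
  Metric.denseRange_iff.1 (denseRange_denseSeq X) x _ Nat.one_div_pos_of_nat

theorem exists_denseBall_subset {x : X} {V : Set X} (hV : V ∈ 𝓝 x) :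
    ∃ p, x ∈ (denseBall p : Set X) ∧ denseBall p ⊆ V := by
  obtain ⟨ε, hε, hεV⟩ := Metric.mem_nhds_iff.1 hV
  obtain ⟨n, hn⟩ := exists_nat_one_div_lt (half_pos hε)
  obtain ⟨k, hk⟩ := exists_mem_denseBall x n
  refine ⟨(k, n), hk, (ball_subset_ball' ?_).trans hεV⟩
  rw [dist_comm]
  have : dist x (denseSeq X k) < 1 / (n + 1) := hk
  linarith

def localizedSet (f : X → Y) (W : Set X) (D : ℕ × ℕ → ℕ × ℕ → Set Y) : Set Y :=
  ⋂ n, ⋃ k, closure (f '' (denseBall (k, n) ∩ W)) ∩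
    ⋂ j : {j // Disjoint (denseBall (k, n) : Set X) (denseBall j)}, D (k, n) j

theorem mem_range_of_mem_localizedSet [CompleteSpace X] [T2Space Y] {f : X → Y}
    (hf : Continuous f) {W : Set X} {D : ℕ × ℕ → ℕ × ℕ → Set Y}
    (hD : ∀ i j, Disjoint (D i j) (D j i)) {y : Y} (hy : y ∈ localizedSet f W D) :
    y ∈ range f := by
  simp only [localizedSet, mem_iInter, mem_iUnion, mem_inter_iff] at hy
  choose k hk hkD using hy
  have hmeet : ∀ m n, ¬Disjoint (denseBall (k m, m) : Set X) (denseBall (k n, n)) :=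
    fun m n h => (hD _ _).ne_of_mem (hkD m ⟨_, h⟩) (hkD n ⟨_, h.symm⟩) rfl
  have hr : Tendsto (fun n : ℕ => 1 / ((n : ℝ) + 1)) atTop (𝓝 0) :=
    tendsto_one_div_add_atTop_nhds_zero_nat
  obtain ⟨z, hz⟩ := cauchySeq_tendsto_of_complete (cauchySeq_of_forall_not_disjoint_ball hr hmeet)
  exact ⟨z, eq_of_forall_mem_closure_image hf.continuousAt (forall_ball_subset_of_tendsto hz hr)
    fun n => closure_mono (image_mono inter_subset_left) (hk n)⟩

theorem mem_localizedSet {f : X → Y} {W : Set X} {D : ℕ × ℕ → ℕ × ℕ → Set Y}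
    (hD : ∀ i j, f '' (denseBall i ∩ W) \ f '' (denseBall j ∩ W) ⊆ D i j) {x : X} (hxW : x ∈ W)
    (hx : ∀ x' ∈ W, f x' = f x → x' = x) : f x ∈ localizedSet f W D := by
  refine mem_iInter.2 fun n => ?_
  obtain ⟨k, hk⟩ := exists_mem_denseBall x n
  have hfx : f x ∈ f '' (denseBall (k, n) ∩ W) := mem_image_of_mem f ⟨hk, hxW⟩
  refine mem_iUnion.2 ⟨k, subset_closure hfx, mem_iInter.2 fun j => hD _ _ ⟨hfx, ?_⟩⟩
  rintro ⟨x', ⟨hx'j, hx'W⟩, hx'⟩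
  exact j.2.ne_of_mem hk hx'j (hx x' hx'W hx').symm

theorem analyticSet_compl_localizedSet [PolishSpace Y] [MeasurableSpace Y] [BorelSpace Y]
    (f : X → Y) (W : Set X) {D : ℕ × ℕ → ℕ × ℕ → Set Y} (hD : ∀ i j, AnalyticSet (D i j)ᶜ) :
    AnalyticSet (localizedSet f W D)ᶜ := by
  simp only [localizedSet, compl_iInter, compl_iUnion, compl_inter]
  exact AnalyticSet.iUnion fun n => AnalyticSet.iInter fun k =>
    isClosed_closure.isOpen_compl.measurableSet.analyticSet.union
      (AnalyticSet.iUnion fun j => hD _ _)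

end Localized

theorem analyticSet_compl_range {X Y : Type*} [TopologicalSpace X] [PolishSpace X]
    [TopologicalSpace Y] [PolishSpace Y] [MeasurableSpace Y] [BorelSpace Y] {f : X → Y}
    (hf : Continuous f) (hfib : ∀ y, (f ⁻¹' {y}).Countable) : AnalyticSet (range f)ᶜ := by
  rcases isEmpty_or_nonempty X with hX | hX
  · simpa [range_eq_empty f] using isClosed_univ.analyticSet
  let := TopologicalSpace.upgradeIsCompletelyMetrizable X
  choose D hDc hDsub hDdisj using fun U : ℕ × ℕ =>
    exists_coanalytic_separators (A := fun i => f '' (denseBall i ∩ denseBall U)) fun i =>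
      (Metric.isOpen_ball.inter Metric.isOpen_ball).analyticSet_image hf
  have hrange : range f = ⋃ U, localizedSet f (denseBall U) (D U) := by
    refine subset_antisymm ?_ (iUnion_subset fun U => fun y hy =>
      mem_range_of_mem_localizedSet hf (hDdisj U) hy)
    rintro _ ⟨x₀, rfl⟩
    obtain ⟨x, hx, hiso⟩ := (isClosed_singleton.preimage hf).exists_nhdsWithin_eq_pure_of_countable
      (hfib (f x₀)) ⟨x₀, rfl⟩
    have hloc : ∀ᶠ x' in 𝓝 x, x' ∈ f ⁻¹' {f x₀} → x' = x :=
      eventually_nhdsWithin_iff.1 (hiso ▸ eventually_pure.2 rfl)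
    obtain ⟨U, hxU, hU⟩ := exists_denseBall_subset hloc
    rw [← show f x = f x₀ from hx]
    exact mem_iUnion.2 ⟨U, mem_localizedSet (hDsub U) hxU fun x' hx'U hx' => hU hx'U (hx'.trans hx)⟩
  rw [hrange, compl_iUnion]
  exact AnalyticSet.iInter fun U => analyticSet_compl_localizedSet f _ (hDc U)

end LusinNovikov

/-- Lusin–Novikov: the image of a Borel map with countable fibers between
standard Borel spaces is Borel. -/
theorem stmt_2 {X Y : Type*} [MeasurableSpace X] [StandardBorelSpace X]
    [MeasurableSpace Y] [StandardBorelSpace Y]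
    (f : X → Y) (hf : Measurable f)
    (hfib : ∀ y : Y, (f ⁻¹' {y}).Countable) :
    MeasurableSet (Set.range f) := by
  let := upgradeStandardBorel X
  let := upgradeStandardBorel Y
  obtain ⟨τ, -, hfc, hτ⟩ := hf.exists_continuous
  exact (@analyticSet_range_of_polishSpace Y _ X τ hτ f hfc).measurableSet_of_compl
    (@LusinNovikov.analyticSet_compl_range X Y τ hτ _ _ _ _ f hfc hfib)
end

section
/- Let B be a compact, connected, locally connected Polish space with a countable base of connected open sets, and let T be a standard Borel space. If U is a subset of B × T that is open in each fiber (i.e., U ∩ (B × {t}) is open in B × {t} for all t) and Borel in B × T, then U is a countable union of 'open prisms' V × S with V ⊆ B open connected and S ⊆ T Borel. -/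
/-!
Take a countable basis of `B` made of connected open sets `V n` and put
`S n = {t | V n × {t} ⊆ U}`; since the fibers of `U` are open, `U = ⋃ n, V n ×ˢ S n`.
Everything lies in showing that `S n` is Borel. Writing `V n` as a countable union of closed
sets, its complement is a countable union of projections of Borel sets with compact sections,
and a continuous surjection from the Cantor space reduces these to Borel sets
`D ⊆ (ℕ → Bool) × T` with closed sections.

For such `D`, the analytic sets `Dᶜ` and `A n = {(a, t) | ∃ b agreeing with a below n, (b, t) ∈ D}`
have empty intersection because the sections of `D` are closed. A Novikov-type separation
theorem gives Borel supersets `C n ⊇ A n`, still depending only on the first `n` bits, with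
`⋂ C = ∅`; compactness of the Cantor space then writes the projection of `D` as a countable
intersection of projections of the `C n`, each a finite union of Borel sets. The separation
theorem is proved by the classical fusion argument: if the parametrisations of the `A n` admit
no separation, refining them one digit at a time converges to a common point.
-/

open Set Function PiNat TopologicalSpace
open MeasureTheory (AnalyticSet AnalyticSet_def)

namespace Novikov

section PrefixInvariant

variable {T : Type*}

def PrefixInvariant (n : ℕ) (S : Set ((ℕ → Bool) × T)) : Prop :=
  ∀ ⦃a b : ℕ → Bool⦄ ⦃t : T⦄, b ∈ cylinder a n → (a, t) ∈ S → (b, t) ∈ S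

theorem PrefixInvariant.mono {m n : ℕ} (hmn : m ≤ n) {S : Set ((ℕ → Bool) × T)}
    (hS : PrefixInvariant m S) : PrefixInvariant n S :=
  fun _ _ _ hb => hS (cylinder_anti _ hmn hb)

theorem prefixInvariant_univ (n : ℕ) : PrefixInvariant n (univ : Set ((ℕ → Bool) × T)) :=
  fun _ _ _ _ h => h

theorem prefixInvariant_empty (n : ℕ) : PrefixInvariant n (∅ : Set ((ℕ → Bool) × T)) :=
  fun _ _ _ _ h => h

theorem prefixInvariant_cylinder_prod (a : ℕ → Bool) (n : ℕ) (W : Set T) :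
    PrefixInvariant n (cylinder a n ×ˢ W) := by
  rintro b c t hc ⟨hb, ht⟩
  exact ⟨mem_cylinder_iff_eq.2 ((mem_cylinder_iff_eq.1 hc).trans (mem_cylinder_iff_eq.1 hb)), ht⟩

theorem PrefixInvariant.iUnion {ι : Sort*} {n : ℕ} {S : ι → Set ((ℕ → Bool) × T)}
    (hS : ∀ k, PrefixInvariant n (S k)) : PrefixInvariant n (⋃ k, S k) := by
  simp only [PrefixInvariant, mem_iUnion]
  exact fun a b t hb ⟨k, hk⟩ => ⟨k, hS k hb hk⟩

theorem PrefixInvariant.iInter {ι : Sort*} {n : ℕ} {S : ι → Set ((ℕ → Bool) × T)}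
    (hS : ∀ k, PrefixInvariant n (S k)) : PrefixInvariant n (⋂ k, S k) := by
  simp only [PrefixInvariant, mem_iInter]
  exact fun a b t hb h k => hS k hb (h k)

theorem PrefixInvariant.compl {n : ℕ} {S : Set ((ℕ → Bool) × T)} (hS : PrefixInvariant n S) :
    PrefixInvariant n Sᶜ :=
  fun a b _ hb ha hbS => ha (hS ((mem_cylinder_comm a b n).1 hb) hbS)

theorem PrefixInvariant.isOpen_section {n : ℕ} {S : Set ((ℕ → Bool) × T)}
    (hS : PrefixInvariant n S) (t : T) : IsOpen {a | (a, t) ∈ S} :=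
  isOpen_iff_mem_nhds.2 fun a ha =>
    Filter.mem_of_superset ((isOpen_cylinder _ a n).mem_nhds (self_mem_cylinder a n))
      fun _ hb => hS hb ha

theorem PrefixInvariant.isClosed_section {n : ℕ} {S : Set ((ℕ → Bool) × T)}
    (hS : PrefixInvariant n S) (t : T) : IsClosed {a | (a, t) ∈ S} :=
  isOpen_compl_iff.1 (hS.compl.isOpen_section t)

theorem PrefixInvariant.measurableSet_exists [MeasurableSpace T] {n : ℕ}
    {S : Set ((ℕ → Bool) × T)} (hS : PrefixInvariant n S) (hSm : MeasurableSet S) :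
    MeasurableSet {t | ∃ a, (a, t) ∈ S} := by
  let extend : (Fin n → Bool) → ℕ → Bool := fun s i => if h : i < n then s ⟨i, h⟩ else false
  have : {t | ∃ a, (a, t) ∈ S} = ⋃ s, {t | (extend s, t) ∈ S} := by
    ext t
    simp only [mem_ofPred_eq, mem_iUnion]
    refine ⟨fun ⟨a, ha⟩ => ⟨fun i => a i, hS (mem_cylinder_iff.2 fun i hi => ?_) ha⟩,
      fun ⟨s, hs⟩ => ⟨_, hs⟩⟩
    simp [extend, hi]
  rw [this]
  exact .iUnion fun s => hSm.preimage measurable_prodMk_left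

theorem exists_forall_mem_of_prefixInvariant {E : ℕ → Set ((ℕ → Bool) × T)}
    (hE : ∀ n, ∃ k, PrefixInvariant k (E n)) (hanti : Antitone E) {t : T}
    (hne : ∀ n, ∃ a, (a, t) ∈ E n) : ∃ a, ∀ n, (a, t) ∈ E n := by
  have hcl : ∀ n, IsClosed {a | (a, t) ∈ E n} := fun n =>
    (hE n).choose_spec.isClosed_section t
  obtain ⟨a, ha⟩ := IsCompact.nonempty_iInter_of_sequence_nonempty_isCompact_isClosed
    (fun n => {a | (a, t) ∈ E n}) (fun n _ ha => hanti n.le_succ ha) hne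
    (hcl 0).isCompact hcl
  exact ⟨a, fun n => mem_iInter.1 ha n⟩

end PrefixInvariant

section Separation

variable {T : Type*} [MeasurableSpace T]

def PrefixSeparable (R : ℕ → Set ((ℕ → Bool) × T)) : Prop :=
  ∃ C : ℕ → Set ((ℕ → Bool) × T), (∀ i, MeasurableSet (C i)) ∧
    (∀ i, i ≠ 0 → PrefixInvariant i (C i)) ∧ (∀ i, R i ⊆ C i) ∧ ⋂ i, C i = ∅

theorem prefixSeparable_of_eq_empty {R : ℕ → Set ((ℕ → Bool) × T)} {j : ℕ} (hj : R j = ∅) :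
    PrefixSeparable R := by
  refine ⟨update (fun _ => univ) j ∅, ?_, ?_, ?_, ?_⟩
  · exact (forall_update_iff _ fun _ s => MeasurableSet s).2 ⟨.empty, fun _ _ => .univ⟩
  · exact (forall_update_iff _ fun i s => i ≠ 0 → PrefixInvariant i s).2
      ⟨fun _ => prefixInvariant_empty j, fun i _ _ => prefixInvariant_univ i⟩
  · exact (forall_update_iff _ fun i s => R i ⊆ s).2 ⟨hj.subset, fun i _ => subset_univ _⟩
  · exact eq_empty_of_subset_empty ((iInter_subset _ j).trans (by simp))

theorem prefixSeparable_of_disjoint {R : ℕ → Set ((ℕ → Bool) × T)} {n : ℕ} (hn : n ≠ 0)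
    {u v : Set ((ℕ → Bool) × T)} (hu : MeasurableSet u) (hv : MeasurableSet v)
    (hinv : PrefixInvariant n u) (huv : Disjoint u v) (hRu : R n ⊆ u) (hRv : R 0 ⊆ v) :
    PrefixSeparable R := by
  refine ⟨update (update (fun _ => univ) 0 v) n u, ?_, ?_, ?_, ?_⟩
  · refine (forall_update_iff _ fun _ s => MeasurableSet s).2 ⟨hu, fun i _ => ?_⟩
    exact (forall_update_iff _ fun _ s => MeasurableSet s).2 ⟨hv, fun _ _ => .univ⟩ i
  · refine (forall_update_iff _ fun i s => i ≠ 0 → PrefixInvariant i s).2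
      ⟨fun _ => hinv, fun i _ => ?_⟩
    exact (forall_update_iff _ fun i s => i ≠ 0 → PrefixInvariant i s).2
      ⟨fun h => (h rfl).elim, fun i _ _ => prefixInvariant_univ i⟩ i
  · refine (forall_update_iff _ fun i s => R i ⊆ s).2 ⟨hRu, fun i _ => ?_⟩
    exact (forall_update_iff _ fun i s => R i ⊆ s).2 ⟨hRv, fun _ _ => subset_univ _⟩ i
  · refine eq_empty_of_subset_empty fun p hp => huv.notMem_of_mem_left (a := p) ?_ ?_
    · simpa using mem_iInter.1 hp n
    · simpa [update_of_ne hn.symm] using mem_iInter.1 hp 0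

theorem PrefixSeparable.of_update_iUnion {R : ℕ → Set ((ℕ → Bool) × T)} {j : ℕ}
    {g : ℕ → Set ((ℕ → Bool) × T)} (hsub : R j ⊆ ⋃ k, g k)
    (hg : ∀ k, PrefixSeparable (update R j (g k))) : PrefixSeparable R := by
  choose C hCm hCinv hRC hC using hg
  refine ⟨update (fun i => ⋂ k, C k i) j (⋃ k, C k j), ?_, ?_, ?_, ?_⟩
  · exact (forall_update_iff _ fun _ s => MeasurableSet s).2
      ⟨.iUnion fun k => hCm k j, fun i _ => .iInter fun k => hCm k i⟩
  · exact (forall_update_iff _ fun i s => i ≠ 0 → PrefixInvariant i s).2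
      ⟨fun hj => .iUnion fun k => hCinv k j hj, fun i _ hi => .iInter fun k => hCinv k i hi⟩
  · refine (forall_update_iff _ fun i s => R i ⊆ s).2 ⟨?_, fun i hi => ?_⟩
    · exact hsub.trans (iUnion_mono fun k => by simpa using hRC k j)
    · exact subset_iInter fun k => by simpa [update_of_ne hi] using hRC k i
  · refine eq_empty_of_subset_empty fun p hp => ?_
    obtain ⟨k, hk⟩ := mem_iUnion.1 (by simpa using mem_iInter.1 hp j)
    refine (hC k).subset (mem_iInter.2 fun i => ?_)
    rcases eq_or_ne i j with rfl | hi
    · exact hk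
    · have hpi : p ∈ ⋂ k, C k i := by simpa [update_of_ne hi] using mem_iInter.1 hp i
      exact mem_iInter.1 hpi k

theorem image_cylinder_congr {X : Type*} (f : ℕ → (ℕ → ℕ) → X) {x y : ℕ → ℕ → ℕ} {L : ℕ → ℕ}
    (hxy : ∀ i, y i ∈ cylinder (x i) (L i)) :
    (fun i => f i '' cylinder (y i) (L i)) = fun i => f i '' cylinder (x i) (L i) :=
  funext fun i => by rw [mem_cylinder_iff_eq.1 (hxy i)]

theorem exists_refine_of_not_prefixSeparable (f : ℕ → (ℕ → ℕ) → (ℕ → Bool) × T)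
    {x : ℕ → ℕ → ℕ} {L : ℕ → ℕ} (h : ¬PrefixSeparable fun i => f i '' cylinder (x i) (L i))
    (j : ℕ) : ∃ z ∈ cylinder (x j) (L j), ¬PrefixSeparable fun i =>
      f i '' cylinder (update x j z i) (update L j (L j + 1) i) := by
  by_contra! hsep
  refine h (PrefixSeparable.of_update_iUnion (j := j)
    (g := fun k => f j '' cylinder (update (x j) (L j) k) (L j + 1)) ?_ fun k => ?_)
  · rw [← image_iUnion, ← iUnion_cylinder_update]
  · convert hsep _ (update_mem_cylinder _ _ k) using 1
    funext i
    exact (apply_update₂ (fun i a b => f i '' cylinder a b) x L j _ _ i).symm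

end Separation

/-- Step `k` of a fusion refines coordinate `(Nat.unpair k).1`; this counts the refinements of
coordinate `i` before step `k`. -/
def dovetailCount (k i : ℕ) : ℕ :=
  ((Finset.range k).filter fun k' => (Nat.unpair k').1 = i).card

theorem dovetailCount_zero : dovetailCount 0 = 0 := by
  funext i
  simp [dovetailCount]

theorem dovetailCount_succ (k : ℕ) :
    dovetailCount (k + 1) =
      update (dovetailCount k) (Nat.unpair k).1 (dovetailCount k (Nat.unpair k).1 + 1) := by
  funext i
  rcases eq_or_ne i (Nat.unpair k).1 with rfl | hi
  · simp [dovetailCount, Finset.range_add_one, Finset.filter_insert]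
  · simp [dovetailCount, Finset.range_add_one, Finset.filter_insert, update_of_ne hi, Ne.symm hi]

theorem dovetailCount_mono (i : ℕ) : Monotone fun k => dovetailCount k i :=
  fun _ _ h => Finset.card_le_card (Finset.filter_subset_filter _ (Finset.range_mono h))

theorem le_dovetailCount {N i : ℕ} (hi : i ≤ N) : N ≤ dovetailCount ((N + 1) ^ 2) i := by
  calc N = ((Finset.range N).image (Nat.pair i)).card := by
        rw [Finset.card_image_of_injective _ fun a b h => (Nat.pair_eq_pair.1 h).2,
          Finset.card_range]
    _ ≤ dovetailCount ((N + 1) ^ 2) i := by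
        refine Finset.card_le_card fun k hk => ?_
        obtain ⟨j, hj, rfl⟩ := Finset.mem_image.1 hk
        simp only [Finset.mem_filter, Finset.mem_range, Nat.unpair_pair, and_true]
        refine (Nat.pair_lt_max_add_one_sq i j).trans_le ?_
        gcongr
        exact max_le hi (Finset.mem_range.1 hj).le

theorem exists_limit_of_refine {P : (ℕ → ℕ → ℕ) → (ℕ → ℕ) → Prop}
    (hcongr : ∀ x y L, (∀ i, y i ∈ cylinder (x i) (L i)) → P x L → P y L)
    (hrefine : ∀ x L, P x L → ∀ j, ∃ z ∈ cylinder (x j) (L j),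
      P (update x j z) (update L j (L j + 1)))
    {x₀ : ℕ → ℕ → ℕ} (h₀ : P x₀ 0) : ∃ ξ, ∀ N, ∃ L, (∀ i ≤ N, N ≤ L i) ∧ P ξ L := by
  choose! z hz_mem hz_P using hrefine
  let x : ℕ → ℕ → ℕ → ℕ := fun k => Nat.rec x₀
    (fun k xk => update xk (Nat.unpair k).1 (z xk (dovetailCount k) (Nat.unpair k).1)) k
  have hP : ∀ k, P (x k) (dovetailCount k) := by
    intro k
    induction k with
    | zero => rw [dovetailCount_zero]; exact h₀
    | succ k ih => rw [dovetailCount_succ]; exact hz_P _ _ ih _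
  have hx_succ : ∀ k i, x (k + 1) i ∈ cylinder (x k i) (dovetailCount k i) := by
    intro k i
    rcases eq_or_ne i (Nat.unpair k).1 with rfl | hi
    · simpa [x] using hz_mem _ _ (hP k) _
    · simp [x, update_of_ne hi]
  have hx_le : ∀ k k', k ≤ k' → ∀ i, x k' i ∈ cylinder (x k i) (dovetailCount k i) := by
    intro k k' hkk' i
    induction k', hkk' using Nat.le_induction with
    | base => exact self_mem_cylinder _ _
    | succ k' hkk' ih =>
      rw [← mem_cylinder_iff_eq.1 ih]
      exact cylinder_anti _ (dovetailCount_mono i hkk') (hx_succ k' i)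
  have hex : ∀ i m, ∃ k, m < dovetailCount k i := fun i m =>
    ⟨_, le_dovetailCount (le_max_left i (m + 1)) |>.trans_lt' (le_max_right i (m + 1))⟩
  let ξ : ℕ → ℕ → ℕ := fun i m => x (Nat.find (hex i m)) i m
  have hξ : ∀ k i, ξ i ∈ cylinder (x k i) (dovetailCount k i) := by
    refine fun k i => mem_cylinder_iff.2 fun m hm => ?_
    exact (mem_cylinder_iff.1 (hx_le _ k (Nat.find_min' _ hm) i) m (Nat.find_spec (hex i m))).symm
  exact ⟨ξ, fun N => ⟨dovetailCount ((N + 1) ^ 2), fun i hi => le_dovetailCount hi,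
    hcongr _ _ _ (hξ _) (hP ((N + 1) ^ 2))⟩⟩

theorem exists_image_cylinder_subset {X : Type*} [TopologicalSpace X] {f : (ℕ → ℕ) → X}
    (hf : Continuous f) (x : ℕ → ℕ) {u : Set X} (hu : IsOpen u) (hx : f x ∈ u) :
    ∃ M, f '' cylinder x M ⊆ u := by
  obtain ⟨_, ⟨y, M, rfl⟩, hxy, hsub⟩ :=
    (isTopologicalBasis_cylinders _).exists_subset_of_mem_open hx (hu.preimage hf)
  exact ⟨M, image_subset_iff.2 (mem_cylinder_iff_eq.1 hxy ▸ hsub)⟩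

section Core

variable {T : Type*} [TopologicalSpace T]

theorem exists_isOpen_prefixInvariant_separating [T2Space T] {p q : (ℕ → Bool) × T} {n : ℕ}
    (h : ¬(q.1 ∈ cylinder p.1 n ∧ q.2 = p.2)) :
    ∃ u v : Set ((ℕ → Bool) × T), IsOpen u ∧ IsOpen v ∧ PrefixInvariant n u ∧
      p ∈ u ∧ q ∈ v ∧ Disjoint u v := by
  have hprod : ∀ W W' : Set T, IsOpen W → IsOpen W' → p.2 ∈ W → q.2 ∈ W' →
      Disjoint (cylinder p.1 n) (cylinder q.1 n) ∨ Disjoint W W' →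
      ∃ u v : Set ((ℕ → Bool) × T), IsOpen u ∧ IsOpen v ∧ PrefixInvariant n u ∧
        p ∈ u ∧ q ∈ v ∧ Disjoint u v := fun W W' hW hW' hpW hqW' hdisj =>
    ⟨cylinder p.1 n ×ˢ W, cylinder q.1 n ×ˢ W', (isOpen_cylinder _ _ n).prod hW,
      (isOpen_cylinder _ _ n).prod hW', prefixInvariant_cylinder_prod _ n W,
      ⟨self_mem_cylinder _ n, hpW⟩, ⟨self_mem_cylinder _ n, hqW'⟩, disjoint_prod.2 hdisj⟩
  by_cases ht : q.2 = p.2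
  · refine hprod univ univ isOpen_univ isOpen_univ trivial trivial (.inl ?_)
    refine disjoint_left.2 fun a hpa hqa => h ⟨?_, ht⟩
    rw [mem_cylinder_iff_eq] at hpa hqa ⊢
    exact hqa.symm.trans hpa
  · obtain ⟨W, W', hW, hW', hpW, hqW', hWW'⟩ := t2_separation (Ne.symm ht)
    exact hprod W W' hW hW' hpW hqW' (.inr hWW')

variable [MeasurableSpace T]

/-- If no separation exists, fusion yields points `ξ i` such that small cylinders around them are
never separable. The limit points `f i (ξ i)` cannot all be `i`-equivalent to `f 0 (ξ 0)`, which
would then lie in every range; open sets separating two of them separate small pieces. -/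
theorem prefixSeparable_range [T2Space T] [OpensMeasurableSpace T]
    {f : ℕ → (ℕ → ℕ) → (ℕ → Bool) × T} (hf : ∀ i, Continuous (f i))
    (hinv : ∀ i, i ≠ 0 → PrefixInvariant i (range (f i))) (hempty : ⋂ i, range (f i) = ∅) :
    PrefixSeparable fun i => range (f i) := by
  by_contra hsep
  obtain ⟨ξ, hξ⟩ := exists_limit_of_refine
    (P := fun x L => ¬PrefixSeparable fun i => f i '' cylinder (x i) (L i))
    (fun _ _ _ hxy => by rw [image_cylinder_congr f hxy]; exact id)
    (fun _ _ => exists_refine_of_not_prefixSeparable f) (x₀ := 0)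
    (by simpa [cylinder_zero] using hsep)
  let p := fun i => f i (ξ i)
  by_cases hsplit : ∃ n, n ≠ 0 ∧ ¬((p 0).1 ∈ cylinder (p n).1 n ∧ (p 0).2 = (p n).2)
  · obtain ⟨n, hn, hdiff⟩ := hsplit
    obtain ⟨u, v, hu, hv, huinv, hpu, hpv, huv⟩ :=
      exists_isOpen_prefixInvariant_separating hdiff
    obtain ⟨Mn, hMn⟩ := exists_image_cylinder_subset (hf n) (ξ n) hu hpu
    obtain ⟨M0, hM0⟩ := exists_image_cylinder_subset (hf 0) (ξ 0) hv hpv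
    obtain ⟨L, hL, hbad⟩ := hξ (max n (max Mn M0))
    refine hbad (prefixSeparable_of_disjoint hn hu.measurableSet hv.measurableSet huinv huv
      ((image_mono (cylinder_anti _ ?_)).trans hMn) ((image_mono (cylinder_anti _ ?_)).trans hM0))
    · have := hL n (by omega)
      omega
    · have := hL 0 (by omega)
      omega
  · push Not at hsplit
    refine eq_empty_iff_forall_notMem.1 hempty (p 0) (mem_iInter.2 fun n => ?_)
    rcases eq_or_ne n 0 with rfl | hn
    · exact mem_range_self _
    · obtain ⟨hcyl, ht⟩ := hsplit n hn
      have := hinv n hn hcyl (mem_range_self (f := f n) (ξ n))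
      rwa [← ht] at this

theorem prefixSeparable_of_analyticSet [T2Space T] [OpensMeasurableSpace T]
    {R : ℕ → Set ((ℕ → Bool) × T)} (hR : ∀ i, AnalyticSet (R i))
    (hinv : ∀ i, i ≠ 0 → PrefixInvariant i (R i)) (hempty : ⋂ i, R i = ∅) :
    PrefixSeparable R := by
  by_cases h : ∃ i, R i = ∅
  · exact prefixSeparable_of_eq_empty h.choose_spec
  push Not at h
  choose f hf hfR using fun i => ((AnalyticSet_def (R i)).mp (hR i)).resolve_left (h i).ne_empty
  obtain rfl : R = fun i => range (f i) := funext fun i => (hfR i).symm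
  exact prefixSeparable_range hf hinv hempty

end Core

section Projection

theorem mem_of_forall_exists_mem_cylinder {E : ℕ → Type*} [∀ n, TopologicalSpace (E n)]
    [∀ n, DiscreteTopology (E n)] {F : Set (∀ n, E n)} (hF : IsClosed F) {a : ∀ n, E n}
    (h : ∀ n, ∃ b ∈ cylinder a n, b ∈ F) : a ∈ F := by
  by_contra ha
  obtain ⟨n, hn⟩ := exists_disjoint_cylinder hF ha
  obtain ⟨b, hba, hbF⟩ := h n
  exact disjoint_left.1 hn hbF hba

variable {T : Type*}

def saturate (n : ℕ) (D : Set ((ℕ → Bool) × T)) : Set ((ℕ → Bool) × T) :=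
  {p | ∃ b ∈ cylinder p.1 n, (b, p.2) ∈ D}

theorem prefixInvariant_saturate (n : ℕ) (D : Set ((ℕ → Bool) × T)) :
    PrefixInvariant n (saturate n D) := fun _ _ _ hb ⟨c, hc, hcD⟩ =>
  ⟨c, mem_cylinder_iff_eq.2 ((mem_cylinder_iff_eq.1 hc).trans (mem_cylinder_iff_eq.1 hb).symm),
    hcD⟩

theorem mem_of_forall_mem_saturate {D : Set ((ℕ → Bool) × T)} {p : (ℕ → Bool) × T}
    (hcl : IsClosed {a | (a, p.2) ∈ D}) (h : ∀ n, p ∈ saturate (n + 1) D) : p ∈ D :=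
  mem_of_forall_exists_mem_cylinder hcl fun n =>
    let ⟨b, hb, hbD⟩ := h n
    ⟨b, cylinder_anti _ n.le_succ hb, hbD⟩

theorem analyticSet_saturate [TopologicalSpace T] [PolishSpace T] [MeasurableSpace T]
    [BorelSpace T] {D : Set ((ℕ → Bool) × T)} (hD : MeasurableSet D) (n : ℕ) :
    AnalyticSet (saturate n D) := by
  have : saturate n D = (fun q : (ℕ → Bool) × (ℕ → Bool) × T => (q.1, q.2.2)) ''
      {q | q.2.1 ∈ cylinder q.1 n ∧ q.2 ∈ D} := by
    ext ⟨a, t⟩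
    simp [saturate]
  rw [this]
  have hcyl : MeasurableSet {q : (ℕ → Bool) × (ℕ → Bool) × T | q.2.1 ∈ cylinder q.1 n} := by
    simp only [mem_cylinder_iff]
    measurability
  exact MeasurableSet.analyticSet_image (hcyl.inter (hD.preimage measurable_snd)) (by fun_prop)

variable [MeasurableSpace T]

/-- Compactness of the Cantor space writes the projection of `D` as `⋂ n, π (⋂ m ≤ n, C (m + 1))`,
and `⋂ m ≤ n, C (m + 1)` depends only on the first `n + 1` bits. -/
theorem measurableSet_exists_of_prefixSeparable {D : Set ((ℕ → Bool) × T)}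
    (hsep : PrefixSeparable (update (fun n => saturate n D) 0 Dᶜ)) :
    MeasurableSet {t | ∃ a, (a, t) ∈ D} := by
  obtain ⟨C, hCm, hCinv, hRC, hC⟩ := hsep
  let E : ℕ → Set ((ℕ → Bool) × T) := fun n => ⋂ m ≤ n, C (m + 1)
  have hE_inv : ∀ n, PrefixInvariant (n + 1) (E n) := fun n =>
    .iInter fun m => .iInter fun hm => (hCinv (m + 1) m.succ_ne_zero).mono (by omega)
  have hproj : {t | ∃ a, (a, t) ∈ D} = ⋂ n, {t | ∃ a, (a, t) ∈ E n} := by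
    ext t
    simp only [mem_iInter, mem_ofPred_eq]
    constructor
    · rintro ⟨a, ha⟩ n
      refine ⟨a, mem_iInter₂.2 fun m _ => hRC (m + 1) ?_⟩
      rw [update_of_ne m.succ_ne_zero]
      exact ⟨a, self_mem_cylinder a _, ha⟩
    · intro h
      obtain ⟨a, ha⟩ := exists_forall_mem_of_prefixInvariant (fun n => ⟨_, hE_inv n⟩)
        (fun _ _ h => iInter₂_mono' fun m hm => ⟨m, hm.trans h, le_rfl⟩) h
      refine ⟨a, by_contra fun haD => ?_⟩
      have : (a, t) ∈ ⋂ i, C i := mem_iInter.2 fun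
        | 0 => hRC 0 (by simpa using haD)
        | m + 1 => mem_iInter₂.1 (ha m) m le_rfl
      rwa [hC] at this
  rw [hproj]
  exact .iInter fun n => (hE_inv n).measurableSet_exists (.iInter fun m => .iInter fun _ => hCm _)

theorem measurableSet_exists_of_isClosed_section_cantor [StandardBorelSpace T]
    {D : Set ((ℕ → Bool) × T)} (hD : MeasurableSet D) (hcl : ∀ t, IsClosed {a | (a, t) ∈ D}) :
    MeasurableSet {t | ∃ a, (a, t) ∈ D} := by
  let := upgradeStandardBorel T
  have : PolishSpace (ℕ → Bool) := {}
  refine measurableSet_exists_of_prefixSeparable (prefixSeparable_of_analyticSet ?_ ?_ ?_)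
  · exact (forall_update_iff _ fun _ s => AnalyticSet s).2
      ⟨hD.compl.analyticSet, fun n _ => analyticSet_saturate hD n⟩
  · exact (forall_update_iff _ fun i s => i ≠ 0 → PrefixInvariant i s).2
      ⟨fun h => (h rfl).elim, fun n _ _ => prefixInvariant_saturate n D⟩
  · refine eq_empty_of_subset_empty fun p hp => ?_
    have hpD : p ∉ D := by simpa using mem_iInter.1 hp 0
    exact hpD (mem_of_forall_mem_saturate (hcl p.2) fun n => by
      simpa using mem_iInter.1 hp (n + 1))

theorem measurableSet_exists_of_isClosed_section {B : Type*} [TopologicalSpace B]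
    [CompactSpace B] [MetrizableSpace B] [MeasurableSpace B] [BorelSpace B] [StandardBorelSpace T]
    {D : Set (B × T)} (hD : MeasurableSet D) (hcl : ∀ t, IsClosed {b | (b, t) ∈ D}) :
    MeasurableSet {t | ∃ b, (b, t) ∈ D} := by
  cases isEmpty_or_nonempty B
  · simp
  obtain ⟨f, hf, hsurj⟩ : ∃ f : (ℕ → Bool) → B, Continuous f ∧ Surjective f :=
    let := metrizableSpaceMetric B
    exists_nat_bool_continuous_surjective_of_compact B
  have : {t | ∃ b, (b, t) ∈ D} = {t | ∃ a, (f a, t) ∈ D} := by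
    ext t
    exact hsurj.exists
  rw [this]
  exact measurableSet_exists_of_isClosed_section_cantor
    (hD.preimage (hf.measurable.prodMap measurable_id)) fun t => (hcl t).preimage hf

theorem measurableSet_forall_mem_of_isOpen {B : Type*} [TopologicalSpace B] [CompactSpace B]
    [MetrizableSpace B] [MeasurableSpace B] [BorelSpace B] [StandardBorelSpace T]
    {U : Set (B × T)} (hU : MeasurableSet U) (hopen : ∀ t, IsOpen {b | (b, t) ∈ U})
    {V : Set B} (hV : IsOpen V) : MeasurableSet {t | ∀ b ∈ V, (b, t) ∈ U} := by
  obtain ⟨F, hF, -, rfl, -⟩ : ∃ F : ℕ → Set B, (∀ n, IsClosed (F n)) ∧ (∀ n, F n ⊆ V) ∧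
      ⋃ n, F n = V ∧ Monotone F :=
    let := metrizableSpaceMetric B
    hV.exists_iUnion_isClosed
  have : {t | ∀ b ∈ ⋃ n, F n, (b, t) ∈ U} = ⋂ n, {t | ∃ b, (b, t) ∈ F n ×ˢ univ \ U}ᶜ := by
    ext t
    simp only [mem_iUnion, mem_iInter, mem_compl_iff, mem_ofPred_eq, mem_sdiff, mem_prod,
      mem_univ, and_true, not_exists, not_and, not_not]
    exact ⟨fun h n b hb => h b ⟨n, hb⟩, fun h b ⟨n, hb⟩ => h n b hb⟩
  rw [this]
  exact .iInter fun n => .compl <| measurableSet_exists_of_isClosed_section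
    (((hF n).measurableSet.prod .univ).diff hU) fun t => by
      convert (hF n).inter (hopen t).isClosed_compl using 1
      ext b
      simp

end Projection

theorem exists_seq_isPreconnected_basis (B : Type*) [TopologicalSpace B]
    [SecondCountableTopology B] [LocallyConnectedSpace B] :
    ∃ V : ℕ → Set B, IsTopologicalBasis (range V) ∧ ∀ n, IsPreconnected (V n) := by
  obtain ⟨s, hs, hsc, hbasis⟩ := IsTopologicalBasis.isOpen_isPreconnected.exists_countable (α := B)
  obtain ⟨V, hV⟩ := (hsc.insert ∅).exists_eq_range (insert_nonempty _ _)
  refine ⟨V, hV ▸ hbasis.insert_empty, fun n => ?_⟩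
  rcases (hV ▸ mem_range_self n : V n ∈ insert ∅ s) with h | h
  · exact h ▸ isPreconnected_empty
  · exact (hs h).2

end Novikov

theorem stmt_15_general {B T : Type*} [TopologicalSpace B] [PolishSpace B]
    [CompactSpace B] [LocallyConnectedSpace B]
    [MeasurableSpace B] [BorelSpace B]
    [MeasurableSpace T] [StandardBorelSpace T]
    (U : Set (B × T)) (hU : MeasurableSet U)
    (hopen : ∀ t : T, IsOpen {b : B | (b, t) ∈ U}) :
    ∃ (V : ℕ → Set B) (S : ℕ → Set T),
      (∀ n, IsOpen (V n)) ∧ (∀ n, IsPreconnected (V n)) ∧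
      (∀ n, MeasurableSet (S n)) ∧
      U = ⋃ n, V n ×ˢ S n := by
  obtain ⟨V, hbasis, hconn⟩ := Novikov.exists_seq_isPreconnected_basis B
  have hVopen : ∀ n, IsOpen (V n) := fun n => hbasis.isOpen (mem_range_self n)
  refine ⟨V, fun n => {t | ∀ b ∈ V n, (b, t) ∈ U}, hVopen, hconn,
    fun n => Novikov.measurableSet_forall_mem_of_isOpen hU hopen (hVopen n), ?_⟩
  ext ⟨b, t⟩
  simp only [mem_iUnion, mem_prod, mem_ofPred_eq]
  refine ⟨fun hbt => ?_, fun ⟨n, hb, ht⟩ => ht b hb⟩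
  obtain ⟨_, ⟨n, rfl⟩, hb, hsub⟩ := hbasis.exists_subset_of_mem_open hbt (hopen t)
  exact ⟨n, hb, hsub⟩

/-- A fiberwise-open Borel subset of `B × T`, with `B` a compact connected
locally connected Polish space and `T` standard Borel, is a countable union
of open prisms `V × S` with `V` open connected and `S` Borel. -/
theorem stmt_15 {B T : Type*} [TopologicalSpace B] [PolishSpace B]
    [CompactSpace B] [ConnectedSpace B] [LocallyConnectedSpace B]
    [MeasurableSpace B] [BorelSpace B]
    [MeasurableSpace T] [StandardBorelSpace T]
    (U : Set (B × T)) (hU : MeasurableSet U)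
    (hopen : ∀ t : T, IsOpen {b : B | (b, t) ∈ U}) :
    ∃ (V : ℕ → Set B) (S : ℕ → Set T),
      (∀ n, IsOpen (V n)) ∧ (∀ n, IsPreconnected (V n)) ∧
      (∀ n, MeasurableSet (S n)) ∧
      U = ⋃ n, V n ×ˢ S n :=
  stmt_15_general U hU hopen
end

section
/- Let Ω₁ and Ω₂ be disjoint compact connected subsets of ℝ², and for i = 1,2 let ε(Ωᵢ) denote the complement of the unique unbounded connected component of ℝ² \ Ωᵢ (the 'filled' set). Then ε(Ω₁) and ε(Ω₂) are either disjoint or nested (one contains the other). -/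
open Set Metric

private lemma stmt17_rank_gt : (1:Cardinal) < Module.rank ℝ (ℝ × ℝ) := by
  have h : Module.rank ℝ (ℝ × ℝ) = 2 := by
    rw [rank_prod', Module.rank_self]; exact one_add_one_eq_two
  rw [h]; norm_num

private lemma stmt17_isPreconnected_compl_closedBall {r : ℝ} (hr : 0 ≤ r) :
    IsPreconnected (closedBall (0:ℝ×ℝ) r)ᶜ := by
  have hsph : IsConnected (sphere (0:ℝ×ℝ) 1) := isConnected_sphere stmt17_rank_gt 0 zero_le_one
  have key : (closedBall (0:ℝ×ℝ) r)ᶜ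
      = (fun p : (ℝ×ℝ) × ℝ => p.2 • p.1) '' ((sphere (0:ℝ×ℝ) 1) ×ˢ (Ioi r)) := by
    ext x
    constructor
    · intro hx
      have hx' : r < ‖x‖ := by
        simpa [mem_compl_iff, mem_closedBall, dist_zero_right] using hx
      have hx0 : x ≠ 0 := by
        intro h; rw [h, norm_zero] at hx'; exact absurd hx' (not_lt.2 hr)
      refine ⟨(‖x‖⁻¹ • x, ‖x‖), ⟨?_, hx'⟩, ?_⟩
      · show ‖x‖⁻¹ • x ∈ sphere (0:ℝ×ℝ) 1
        rw [mem_sphere_iff_norm, sub_zero, norm_smul, norm_inv, norm_norm,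
          inv_mul_cancel₀ (norm_ne_zero_iff.2 hx0)]
      · show ‖x‖ • ‖x‖⁻¹ • x = x
        rw [smul_smul, mul_inv_cancel₀ (norm_ne_zero_iff.2 hx0), one_smul]
    · rintro ⟨⟨w, ρ⟩, ⟨hw, hρ⟩, rfl⟩
      simp only [mem_sphere_iff_norm, sub_zero] at hw
      simp only [mem_Ioi] at hρ
      simp only [mem_compl_iff, mem_closedBall, dist_zero_right, not_le]
      show r < ‖ρ • w‖
      rw [norm_smul, hw, mul_one, Real.norm_eq_abs, abs_of_pos (lt_of_le_of_lt hr hρ)]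
      exact hρ
  rw [key]
  exact (hsph.isPreconnected.prod isPreconnected_Ioi).image _
    ((continuous_snd.smul continuous_fst).continuousOn)

private lemma stmt17_closure_comp_subset {F : Set (ℝ×ℝ)} (hF : IsOpen F) (z : ℝ×ℝ) :
    closure (connectedComponentIn F z) ⊆ connectedComponentIn F z ∪ Fᶜ := by
  intro y hy
  by_cases hyF : y ∈ F
  · left
    have hopen : IsOpen (connectedComponentIn F y) := hF.connectedComponentIn
    have hyy : y ∈ connectedComponentIn F y := mem_connectedComponentIn hyF
    obtain ⟨w, hw1, hw2⟩ := mem_closure_iff.1 hy _ hopen hyy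
    have h1 : connectedComponentIn F y = connectedComponentIn F w := connectedComponentIn_eq hw1
    have h2 : connectedComponentIn F z = connectedComponentIn F w := connectedComponentIn_eq hw2
    rw [← h2] at h1
    exact h1 ▸ hyy
  · exact Or.inr hyF

private lemma stmt17_unbounded_comp_unique {Ω : Set (ℝ×ℝ)} (hΩ : IsCompact Ω) {x : ℝ×ℝ}
    (hU : ¬ Bornology.IsBounded (connectedComponentIn Ωᶜ x))
    {V : Set (ℝ×ℝ)} (hV : IsPreconnected V) (hVsub : V ⊆ Ωᶜ)
    (hVunb : ¬ Bornology.IsBounded V) :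
    V ⊆ connectedComponentIn Ωᶜ x := by
  obtain ⟨r, hr⟩ := hΩ.isBounded.subset_closedBall 0
  set R := max r 0 with hR
  have hΩR : Ω ⊆ closedBall 0 R := hr.trans (closedBall_subset_closedBall (le_max_left _ _))
  set K := (closedBall (0:ℝ×ℝ) R)ᶜ with hK
  have hKpc : IsPreconnected K := stmt17_isPreconnected_compl_closedBall (le_max_right _ _)
  have hKsub : K ⊆ Ωᶜ := compl_subset_compl.2 hΩR
  set U := connectedComponentIn Ωᶜ x with hUdef
  have hUpc : IsPreconnected U := isPreconnected_connectedComponentIn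
  have hUsub : U ⊆ Ωᶜ := connectedComponentIn_subset _ _
  have hVK : (V ∩ K).Nonempty := by
    rw [inter_compl_nonempty_iff]
    intro h; exact hVunb (Bornology.IsBounded.subset isBounded_closedBall h)
  have hUK : (U ∩ K).Nonempty := by
    rw [inter_compl_nonempty_iff]
    intro h; exact hU (Bornology.IsBounded.subset isBounded_closedBall h)
  have hVKpc : IsPreconnected (V ∪ K) := hV.union' hVK hKpc
  have hall : IsPreconnected (U ∪ (V ∪ K)) := by
    apply hUpc.union'
    · obtain ⟨u, hu1, hu2⟩ := hUK
      exact ⟨u, hu1, Or.inr hu2⟩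
    · exact hVKpc
  obtain ⟨u, huU, huK⟩ := hUK
  have hsub : U ∪ (V ∪ K) ⊆ Ωᶜ := by
    rintro y (h | h | h)
    exacts [hUsub h, hVsub h, hKsub h]
  have hfin := hall.subset_connectedComponentIn (Or.inl huU) hsub
  have heq : connectedComponentIn Ωᶜ u = U := (connectedComponentIn_eq huU).symm
  rw [heq] at hfin
  exact fun y hy => hfin (Or.inr (Or.inl hy))

private lemma stmt17_envelope_preconnected {Ω : Set (ℝ×ℝ)} (hΩcl : IsClosed Ω)
    (hΩc : IsConnected Ω) {x : ℝ×ℝ} (hx : x ∈ Ωᶜ) :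
    IsPreconnected (connectedComponentIn Ωᶜ x)ᶜ := by
  have hF : IsOpen Ωᶜ := hΩcl.isOpen_compl
  set U := connectedComponentIn Ωᶜ x with hU
  obtain ⟨p₀, hp₀⟩ := hΩc.nonempty
  have hΩE : Ω ⊆ Uᶜ := fun q hq hqU => (connectedComponentIn_subset Ωᶜ x hqU) hq
  have piece : ∀ y ∈ Uᶜ \ Ω, IsPreconnected (Ω ∪ connectedComponentIn Ωᶜ y) ∧
      Ω ∪ connectedComponentIn Ωᶜ y ⊆ Uᶜ := by
    rintro y ⟨hyU, hyΩ⟩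
    set C := connectedComponentIn Ωᶜ y with hC
    have hyF : y ∈ Ωᶜ := hyΩ
    have hCne : C.Nonempty := ⟨y, mem_connectedComponentIn hyF⟩
    have hCopen : IsOpen C := hF.connectedComponentIn
    have hCsubE : C ⊆ Uᶜ := by
      intro w hw hwU
      apply hyU
      have h1 : connectedComponentIn Ωᶜ y = connectedComponentIn Ωᶜ w := connectedComponentIn_eq hw
      have h2 : connectedComponentIn Ωᶜ x = connectedComponentIn Ωᶜ w :=
        connectedComponentIn_eq hwU
      rw [hU, h2, ← h1]
      exact mem_connectedComponentIn hyF
    have hclsub : closure C ⊆ C ∪ Ω := by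
      simpa using stmt17_closure_comp_subset hF y
    have hnotclosed : ∃ p ∈ closure C, p ∉ C := by
      by_contra h
      push_neg at h
      have hcl : IsClosed C := by
        rw [← closure_eq_iff_isClosed]
        exact subset_antisymm (fun p hp => h p hp) subset_closure
      rcases isClopen_iff.1 ⟨hcl, hCopen⟩ with h' | h'
      · exact hCne.ne_empty h'
      · have : p₀ ∈ C := h' ▸ mem_univ p₀
        exact (connectedComponentIn_subset Ωᶜ y this) hp₀
    obtain ⟨p, hpcl, hpC⟩ := hnotclosed
    have hpΩ : p ∈ Ω := (hclsub hpcl).resolve_left hpC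
    have hpre : IsPreconnected (Ω ∪ closure C) :=
      hΩc.isPreconnected.union' ⟨p, hpΩ, hpcl⟩ isPreconnected_connectedComponentIn.closure
    have heq : Ω ∪ C = Ω ∪ closure C := by
      apply subset_antisymm
      · exact union_subset_union_right Ω subset_closure
      · intro q hq
        rcases hq with h | h
        · exact Or.inl h
        · rcases hclsub h with h' | h'
          exacts [Or.inr h', Or.inl h']
    constructor
    · rw [heq]; exact hpre
    · exact union_subset hΩE hCsubE
  set c : Set (Set (ℝ×ℝ)) :=
    insert Ω ((fun y => Ω ∪ connectedComponentIn Ωᶜ y) '' (Uᶜ \ Ω)) with hc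
  have hsU : ⋃₀ c = Uᶜ := by
    apply subset_antisymm
    · rintro q ⟨S, hS, hqS⟩
      rcases hS with rfl | ⟨y, hy, rfl⟩
      · exact hΩE hqS
      · exact (piece y hy).2 hqS
    · intro q hq
      by_cases hqΩ : q ∈ Ω
      · exact ⟨Ω, mem_insert _ _, hqΩ⟩
      · refine ⟨Ω ∪ connectedComponentIn Ωᶜ q, Or.inr ⟨q, ⟨hq, hqΩ⟩, rfl⟩, Or.inr ?_⟩
        exact mem_connectedComponentIn hqΩ
  rw [← hsU]
  apply isPreconnected_sUnion p₀
  · rintro S (rfl | ⟨y, hy, rfl⟩)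
    exacts [hp₀, Or.inl hp₀]
  · rintro S (rfl | ⟨y, hy, rfl⟩)
    exacts [hΩc.isPreconnected, (piece y hy).1]

/-- The envelopes (filled sets) of two disjoint compact connected subsets of
the plane are disjoint or nested. Here the envelope of `Ω` is the complement
of the unbounded connected component of `Ωᶜ`. -/
theorem stmt_17 (Ω₁ Ω₂ : Set (ℝ × ℝ))
    (h₁ : IsCompact Ω₁) (h₁c : IsConnected Ω₁)
    (h₂ : IsCompact Ω₂) (h₂c : IsConnected Ω₂)
    (hdisj : Disjoint Ω₁ Ω₂)
    (x₁ x₂ : ℝ × ℝ) (hx₁ : x₁ ∈ Ω₁ᶜ) (hx₂ : x₂ ∈ Ω₂ᶜ)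
    (hU₁ : ¬ Bornology.IsBounded (connectedComponentIn Ω₁ᶜ x₁))
    (hU₂ : ¬ Bornology.IsBounded (connectedComponentIn Ω₂ᶜ x₂)) :
    Disjoint (connectedComponentIn Ω₁ᶜ x₁)ᶜ (connectedComponentIn Ω₂ᶜ x₂)ᶜ ∨
      (connectedComponentIn Ω₁ᶜ x₁)ᶜ ⊆ (connectedComponentIn Ω₂ᶜ x₂)ᶜ ∨
      (connectedComponentIn Ω₂ᶜ x₂)ᶜ ⊆ (connectedComponentIn Ω₁ᶜ x₁)ᶜ := by
  set U₁ := connectedComponentIn Ω₁ᶜ x₁ with hU₁def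
  set U₂ := connectedComponentIn Ω₂ᶜ x₂ with hU₂def
  have hΩ₂sub : Ω₂ ⊆ Ω₁ᶜ := fun q hq hq1 => (disjoint_left.1 hdisj) hq1 hq
  by_cases hcase : (Ω₂ ∩ U₁).Nonempty
  · -- Ω₂ ⊆ U₁, so the envelope of Ω₁ avoids Ω₂
    obtain ⟨w, hwΩ₂, hwU₁⟩ := hcase
    have hΩ₂U₁ : Ω₂ ⊆ U₁ := by
      have h1 : Ω₂ ⊆ connectedComponentIn Ω₁ᶜ w :=
        h₂c.isPreconnected.subset_connectedComponentIn hwΩ₂ hΩ₂sub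
      have h2 : connectedComponentIn Ω₁ᶜ x₁ = connectedComponentIn Ω₁ᶜ w :=
        connectedComponentIn_eq hwU₁
      rw [hU₁def, h2]; exact h1
    have hE₁sub : U₁ᶜ ⊆ Ω₂ᶜ := fun q hq hq2 => hq (hΩ₂U₁ hq2)
    have hE₁pc : IsPreconnected U₁ᶜ := stmt17_envelope_preconnected h₁.isClosed h₁c hx₁
    obtain ⟨q, hqΩ₁⟩ := h₁c.nonempty
    have hqE₁ : q ∈ U₁ᶜ := fun hqU₁ => (connectedComponentIn_subset Ω₁ᶜ x₁ hqU₁) hqΩ₁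
    have hE₁D : U₁ᶜ ⊆ connectedComponentIn Ω₂ᶜ q :=
      hE₁pc.subset_connectedComponentIn hqE₁ hE₁sub
    by_cases hcase2 : ((connectedComponentIn Ω₂ᶜ q) ∩ U₂).Nonempty
    · -- envelope of Ω₁ lies in U₂: envelopes disjoint
      obtain ⟨v, hvD, hvU₂⟩ := hcase2
      have hDU₂ : connectedComponentIn Ω₂ᶜ q = U₂ := by
        have hv1 : connectedComponentIn Ω₂ᶜ q = connectedComponentIn Ω₂ᶜ v :=
          connectedComponentIn_eq hvD
        have hv2 : connectedComponentIn Ω₂ᶜ x₂ = connectedComponentIn Ω₂ᶜ v :=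
          connectedComponentIn_eq hvU₂
        rw [hv1, hU₂def, hv2]
      left
      rw [Set.disjoint_left]
      intro a haE₁ haE₂
      exact haE₂ (hDU₂ ▸ hE₁D haE₁)
    · -- envelope of Ω₁ inside envelope of Ω₂
      right; left
      intro a haE₁ haU₂
      rcases hcase2 ⟨a, hE₁D haE₁, haU₂⟩
  · -- U₁ avoids Ω₂, so U₁ ⊆ U₂ and envelope of Ω₂ ⊆ envelope of Ω₁
    right; right
    have hU₁sub : U₁ ⊆ Ω₂ᶜ := by
      intro y hy hy2
      exact hcase ⟨y, hy2, hy⟩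
    have hU₁U₂ : U₁ ⊆ U₂ :=
      stmt17_unbounded_comp_unique h₂ hU₂ isPreconnected_connectedComponentIn hU₁sub hU₁
    exact compl_subset_compl.2 hU₁U₂
end
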